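/- Define Φ : ℝ² → ℝ² in polar-type form by Φ(x) = S_x · x where S_x is the rotation matrix by angle f(|x|), i.e., Φ(x) = (cos f(|x|) x₁ + sin f(|x|) x₂, −sin f(|x|) x₁ + cos f(|x|) x₂), for a C¹ function f : [0,∞) → ℝ. If t|f'(t)| ≤ cε for all t ≥ 0 (for a suitable absolute constant c > 0 and 0 < ε < 1), then Φ is an ε-distorted diffeomorphism: (1−ε)I ≤ (Φ'(x))ᵀΦ'(x) ≤ (1+ε)I for all x. -/

import Mathlib

open Matrix MeasureTheory

/-- Hilbert–Schmidt norm of a D×D real matrix. -/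
noncomputable def hsNorm {D : ℕ} (M : Matrix (Fin D) (Fin D) ℝ) : ℝ :=
  Real.sqrt (∑ i, ∑ j, (M i j) ^ 2)

/-- Jacobian matrix of a map `ℝ^D → ℝ^D`: entry `(i,j)` is `∂Φ_i/∂x_j`. -/
noncomputable def jacobian {D : ℕ} (Φ : (Fin D → ℝ) → (Fin D → ℝ)) (x : Fin D → ℝ) :
    Matrix (Fin D) (Fin D) ℝ :=
  fun i j => fderiv ℝ Φ x (Pi.single j 1) i

/-- `Φ` is an ε-distorted diffeomorphism:
a bijective differentiable map with `(1-ε)I ≤ (Φ')ᵀ Φ' ≤ (1+ε)I` as quadratic forms. -/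
structure EpsDistorted {D : ℕ} (Φ : (Fin D → ℝ) → (Fin D → ℝ)) (ε : ℝ) : Prop where
  bijective : Function.Bijective Φ
  differentiable : Differentiable ℝ Φ
  lower : ∀ (x : Fin D → ℝ) (v : Fin D → ℝ),
    (1 - ε) * (∑ i, (v i) ^ 2) ≤ v ⬝ᵥ ((jacobian Φ x)ᵀ * jacobian Φ x).mulVec v
  upper : ∀ (x : Fin D → ℝ) (v : Fin D → ℝ),
    v ⬝ᵥ ((jacobian Φ x)ᵀ * jacobian Φ x).mulVec v ≤ (1 + ε) * (∑ i, (v i) ^ 2)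

/-!
Identify `ℝ²` with `ℂ`; then `Φ z = exp (i θ z) z` with the angle `θ z = -f ‖z‖`. Off the origin
`Φ'(z) w = exp (i θ z) (w + θ'(w) i z)`, and `|θ'(w)| ‖z‖ ≤ ‖z‖ |f'(‖z‖)| ‖w‖ ≤ (ε / 3) ‖w‖`, so
by the triangle inequality `‖Φ'(z) w‖²` lies between `(1 - ε) ‖w‖²` and `(1 + ε) ‖w‖²`. At the
origin `θ` is merely continuous, which still makes `Φ'(0)` the rotation by `θ 0`, because
`(exp (i θ z) - exp (i θ 0)) z = o(z)`. Since `Φ` preserves `‖z‖`, rotating back by `f ‖z‖`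
inverts it.
-/

theorem jacobian_mulVec {D : ℕ} (Φ : (Fin D → ℝ) → (Fin D → ℝ)) (x v : Fin D → ℝ) :
    jacobian Φ x *ᵥ v = fderiv ℝ Φ x v := by
  ext i
  conv_rhs => rw [pi_eq_sum_univ' v]
  simp [jacobian, mulVec, dotProduct, mul_comm]

theorem dotProduct_transpose_jacobian_mul_mulVec {D : ℕ} (Φ : (Fin D → ℝ) → (Fin D → ℝ))
    (x v : Fin D → ℝ) :
    v ⬝ᵥ ((jacobian Φ x)ᵀ * jacobian Φ x) *ᵥ v = ∑ i, (fderiv ℝ Φ x v i) ^ 2 := by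
  rw [← mulVec_mulVec, dotProduct_mulVec, vecMul_transpose, jacobian_mulVec]
  simp [dotProduct, sq]

section NormAdd

variable {E : Type*} [SeminormedAddCommGroup E] {w u : E} {δ : ℝ}

theorem one_sub_two_mul_mul_sq_norm_le_sq_norm_add (h : ‖u‖ ≤ δ * ‖w‖) :
    (1 - 2 * δ) * ‖w‖ ^ 2 ≤ ‖w + u‖ ^ 2 := by
  have htri : ‖w‖ - ‖u‖ ≤ ‖w + u‖ := by simpa using norm_sub_le (w + u) u
  have hwu := mul_le_mul_of_nonneg_left h (norm_nonneg w)
  rcases le_total ‖u‖ ‖w‖ with hle | hle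
  · have := pow_le_pow_left₀ (sub_nonneg.2 hle) htri 2
    nlinarith [sq_nonneg ‖u‖]
  · nlinarith [norm_nonneg w]

theorem sq_norm_add_le_one_add_three_mul_mul_sq_norm (hδ : δ ≤ 1) (h : ‖u‖ ≤ δ * ‖w‖) :
    ‖w + u‖ ^ 2 ≤ (1 + 3 * δ) * ‖w‖ ^ 2 := by
  have htri := pow_le_pow_left₀ (norm_nonneg _) (norm_add_le w u) 2
  have hle : ‖u‖ ≤ ‖w‖ := by nlinarith [norm_nonneg w]
  nlinarith [mul_le_mul_of_nonneg_left h (norm_nonneg w),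
    mul_le_mul_of_nonneg_left hle (norm_nonneg u)]

end NormAdd

open Complex

noncomputable def finTwoEquivComplex : (Fin 2 → ℝ) ≃L[ℝ] ℂ :=
  (ContinuousLinearEquiv.finTwoArrow ℝ ℝ).trans equivRealProdCLM.symm

@[simp]
theorem finTwoEquivComplex_apply (v : Fin 2 → ℝ) : finTwoEquivComplex v = v 0 + v 1 * I := by
  simp [finTwoEquivComplex, equivRealProdCLM_symm_apply]

@[simp]
theorem finTwoEquivComplex_symm_apply (z : ℂ) : finTwoEquivComplex.symm z = ![z.re, z.im] := by
  simp [finTwoEquivComplex]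

theorem sum_sq_finTwoEquivComplex_symm (z : ℂ) :
    ∑ i, (finTwoEquivComplex.symm z i) ^ 2 = ‖z‖ ^ 2 := by
  rw [Complex.sq_norm, normSq_apply]
  simp [sq]

theorem sum_sq_eq_sq_norm_finTwoEquivComplex (v : Fin 2 → ℝ) :
    ∑ i, v i ^ 2 = ‖finTwoEquivComplex v‖ ^ 2 := by
  rw [← sum_sq_finTwoEquivComplex_symm, ContinuousLinearEquiv.symm_apply_apply]

theorem EpsDistorted.of_complex {Ψ : ℂ → ℂ} {Ψ' : ℂ → ℂ →L[ℝ] ℂ} {ε : ℝ}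
    (hbij : Function.Bijective Ψ) (hΨ : ∀ z, HasFDerivAt Ψ (Ψ' z) z)
    (hlower : ∀ z w, (1 - ε) * ‖w‖ ^ 2 ≤ ‖Ψ' z w‖ ^ 2)
    (hupper : ∀ z w, ‖Ψ' z w‖ ^ 2 ≤ (1 + ε) * ‖w‖ ^ 2) :
    EpsDistorted (finTwoEquivComplex.symm ∘ Ψ ∘ finTwoEquivComplex) ε := by
  set e := finTwoEquivComplex
  have hΦ : ∀ x, HasFDerivAt (e.symm ∘ Ψ ∘ e)
      ((e.symm : ℂ →L[ℝ] (Fin 2 → ℝ)) ∘L Ψ' (e x) ∘L (e : (Fin 2 → ℝ) →L[ℝ] ℂ)) x :=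
    fun x => e.symm.hasFDerivAt.comp x ((hΨ (e x)).comp x e.hasFDerivAt)
  have hquad : ∀ x v,
      v ⬝ᵥ ((jacobian (e.symm ∘ Ψ ∘ e) x)ᵀ * jacobian (e.symm ∘ Ψ ∘ e) x) *ᵥ v
        = ‖Ψ' (e x) (e v)‖ ^ 2 := fun x v => by
    rw [dotProduct_transpose_jacobian_mul_mulVec, (hΦ x).fderiv]
    exact sum_sq_finTwoEquivComplex_symm _
  refine ⟨e.symm.bijective.comp (hbij.comp e.bijective), fun x => (hΦ x).differentiableAt,
    fun x v => ?_, fun x v => ?_⟩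
  · rw [hquad, sum_sq_eq_sq_norm_finTwoEquivComplex]
    exact hlower _ _
  · rw [hquad, sum_sq_eq_sq_norm_finTwoEquivComplex]
    exact hupper _ _

theorem hasFDerivAt_mul_self_zero {g : ℂ → ℂ} (hg : ContinuousAt g 0) :
    HasFDerivAt (fun y => g y * y) (g 0 • ContinuousLinearMap.id ℝ ℂ) 0 := by
  rw [hasFDerivAt_iff_isLittleO_nhds_zero]
  have hsmall : (fun y => g y - g 0) =o[nhds 0] (fun _ => (1 : ℂ)) :=
    (Asymptotics.isLittleO_one_iff ℂ).mpr (tendsto_sub_nhds_zero_iff.mpr hg)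
  simpa [sub_mul] using hsmall.mul_isBigO (Asymptotics.isBigO_refl (fun y : ℂ => y) _)

theorem norm_fderiv_comp_norm_le {E : Type*} [NormedAddCommGroup E] [InnerProductSpace ℝ E]
    {g : ℝ → ℝ} {z : E} (hg : DifferentiableAt ℝ g ‖z‖) (hz : z ≠ 0) :
    ‖fderiv ℝ (fun z => g ‖z‖) z‖ ≤ |deriv g ‖z‖| := by
  have hnorm : HasFDerivAt (‖·‖) (fderiv ℝ (‖·‖) z) z :=
    (differentiableAt_id.norm ℝ hz).hasFDerivAt
  have hlip : ‖fderiv ℝ (‖·‖) z‖ ≤ 1 := by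
    simpa using norm_fderiv_le_of_lipschitz ℝ (lipschitzWith_one_norm (E := E)) (x₀ := z)
  rw [show (fun z => g ‖z‖) = g ∘ (‖·‖) from rfl, (hg.hasDerivAt.comp_hasFDerivAt z hnorm).fderiv,
    norm_smul, Real.norm_eq_abs]
  exact mul_le_of_le_one_right (abs_nonneg _) hlip

noncomputable def twist (θ : ℂ → ℝ) (z : ℂ) : ℂ := exp (θ z * I) * z

noncomputable def twistDeriv (θ : ℂ → ℝ) (θ' : ℂ →L[ℝ] ℝ) (z : ℂ) : ℂ →L[ℝ] ℂ :=
  exp (θ z * I) • (ContinuousLinearMap.id ℝ ℂ + θ'.smulRight (I * z))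

section Twist

variable {θ : ℂ → ℝ}

theorem twistDeriv_apply (θ' : ℂ →L[ℝ] ℝ) (z w : ℂ) :
    twistDeriv θ θ' z w = exp (θ z * I) * (w + θ' w * (I * z)) := by
  simp [twistDeriv, mul_add]

theorem norm_twistDeriv_apply (θ' : ℂ →L[ℝ] ℝ) (z w : ℂ) :
    ‖twistDeriv θ θ' z w‖ = ‖w + θ' w * (I * z)‖ := by
  rw [twistDeriv_apply, norm_mul, norm_exp_ofReal_mul_I, one_mul]

theorem hasFDerivAt_twist {θ' : ℂ →L[ℝ] ℝ} {z : ℂ} (h : HasFDerivAt θ θ' z) :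
    HasFDerivAt (twist θ) (twistDeriv θ θ' z) z := by
  have hexp := ((ofRealCLM.hasFDerivAt.comp z h).mul_const I).cexp
  refine (hexp.mul (hasFDerivAt_id z)).congr_fderiv ?_
  ext w
  simp only [Function.comp_apply, ofRealCLM_apply, id_eq, _root_.add_apply, _root_.smul_apply,
    ContinuousLinearMap.id_apply, smul_eq_mul, ContinuousLinearMap.comp_apply, twistDeriv_apply]
  ring

theorem hasFDerivAt_twist_zero (h : ContinuousAt θ 0) (θ' : ℂ →L[ℝ] ℝ) :
    HasFDerivAt (twist θ) (twistDeriv θ θ' 0) 0 := by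
  have hg : ContinuousAt (fun y => exp (θ y * I)) 0 := by fun_prop
  have hzero : twistDeriv θ θ' 0 = exp (θ 0 * I) • ContinuousLinearMap.id ℝ ℂ := by
    simp [twistDeriv]
  exact hzero ▸ hasFDerivAt_mul_self_zero hg

end Twist

theorem norm_twist_radial (g : ℝ → ℝ) (z : ℂ) : ‖twist (fun z => g ‖z‖) z‖ = ‖z‖ := by
  rw [twist, norm_mul, norm_exp_ofReal_mul_I, one_mul]

theorem leftInverse_twist_radial (g : ℝ → ℝ) :
    Function.LeftInverse (twist fun z => -g ‖z‖) (twist fun z => g ‖z‖) := by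
  intro z
  rw [twist, norm_twist_radial, twist, ← mul_assoc, ← exp_add]
  simp

theorem bijective_twist_radial (g : ℝ → ℝ) : Function.Bijective (twist fun z => g ‖z‖) :=
  Function.bijective_iff_has_inverse.mpr ⟨_, leftInverse_twist_radial g,
    fun z => by simpa using leftInverse_twist_radial (fun r => -g r) z⟩

theorem hasFDerivAt_twist_radial {g : ℝ → ℝ} (hg : Differentiable ℝ g) (z : ℂ) :
    HasFDerivAt (twist fun z => g ‖z‖)
      (twistDeriv (fun z => g ‖z‖) (fderiv ℝ (fun z => g ‖z‖) z) z) z := by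
  rcases eq_or_ne z 0 with rfl | hz
  · exact hasFDerivAt_twist_zero (by have := hg.continuous; fun_prop) _
  · exact hasFDerivAt_twist ((hg _).comp z (differentiableAt_id.norm ℝ hz)).hasFDerivAt

theorem norm_fderiv_radial_mul_I_mul_le {g : ℝ → ℝ} (hg : Differentiable ℝ g) (z w : ℂ) :
    ‖fderiv ℝ (fun z => g ‖z‖) z w * (I * z)‖ ≤ ‖z‖ * |deriv g ‖z‖| * ‖w‖ := by
  rcases eq_or_ne z 0 with rfl | hz
  · simp
  calc ‖fderiv ℝ (fun z => g ‖z‖) z w * (I * z)‖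
      = ‖z‖ * ‖fderiv ℝ (fun z => g ‖z‖) z w‖ := by simp [mul_comm]
    _ ≤ ‖z‖ * (|deriv g ‖z‖| * ‖w‖) := by
        gcongr
        exact (ContinuousLinearMap.le_opNorm _ w).trans
          (by gcongr; exact norm_fderiv_comp_norm_le (hg _) hz)
    _ = ‖z‖ * |deriv g ‖z‖| * ‖w‖ := by ring

theorem eq_comp_twist_neg_radial {f : ℝ → ℝ} {Φ : (Fin 2 → ℝ) → (Fin 2 → ℝ)}
    (hΦ : ∀ x : Fin 2 → ℝ,
      Φ x = ![Real.cos (f (Real.sqrt ((x 0) ^ 2 + (x 1) ^ 2))) * x 0 +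
                Real.sin (f (Real.sqrt ((x 0) ^ 2 + (x 1) ^ 2))) * x 1,
              -Real.sin (f (Real.sqrt ((x 0) ^ 2 + (x 1) ^ 2))) * x 0 +
                Real.cos (f (Real.sqrt ((x 0) ^ 2 + (x 1) ^ 2))) * x 1]) :
    Φ = finTwoEquivComplex.symm ∘ twist (fun z => -f ‖z‖) ∘ finTwoEquivComplex := by
  funext x
  simp only [hΦ, Function.comp_apply, finTwoEquivComplex_apply, finTwoEquivComplex_symm_apply,
    twist, norm_add_mul_I, exp_mul_I, ← ofReal_cos, ← ofReal_sin]
  simp [cos_ofReal_re, sin_ofReal_re, add_comm]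

theorem stmt15 :
    ∃ c : ℝ, 0 < c ∧ ∀ (f : ℝ → ℝ) (ε : ℝ), 0 < ε → ε < 1 →
      ContDiff ℝ 1 f → (∀ t : ℝ, 0 ≤ t → t * |deriv f t| ≤ c * ε) →
      ∀ Φ : (Fin 2 → ℝ) → (Fin 2 → ℝ),
        (∀ x : Fin 2 → ℝ,
          Φ x = ![Real.cos (f (Real.sqrt ((x 0) ^ 2 + (x 1) ^ 2))) * x 0 +
                    Real.sin (f (Real.sqrt ((x 0) ^ 2 + (x 1) ^ 2))) * x 1,
                  -Real.sin (f (Real.sqrt ((x 0) ^ 2 + (x 1) ^ 2))) * x 0 +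
                    Real.cos (f (Real.sqrt ((x 0) ^ 2 + (x 1) ^ 2))) * x 1]) →
        EpsDistorted Φ ε := by
  refine ⟨1 / 3, by norm_num, fun f ε hε hε1 hf hslow Φ hΦ => ?_⟩
  have hg : Differentiable ℝ (fun r => -f r) := (hf.differentiable one_ne_zero).neg
  have hδ : ∀ z w : ℂ, ‖fderiv ℝ (fun z => -f ‖z‖) z w * (I * z)‖ ≤ ε / 3 * ‖w‖ := by
    intro z w
    refine (norm_fderiv_radial_mul_I_mul_le hg z w).trans
      (mul_le_mul_of_nonneg_right ?_ (norm_nonneg w))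
    rw [deriv.fun_neg, abs_neg]
    linarith [hslow ‖z‖ (norm_nonneg z)]
  rw [eq_comp_twist_neg_radial hΦ]
  refine EpsDistorted.of_complex (bijective_twist_radial fun r => -f r)
    (hasFDerivAt_twist_radial hg) (fun z w => ?_) (fun z w => ?_) <;> rw [norm_twistDeriv_apply]
  · nlinarith [one_sub_two_mul_mul_sq_norm_le_sq_norm_add (hδ z w),
      mul_nonneg hε.le (sq_nonneg ‖w‖)]
  · exact (sq_norm_add_le_one_add_three_mul_mul_sq_norm (by linarith) (hδ z w)).trans_eq (by ring)
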